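/- arXiv:2302.06814 — 2 statements merged into one kernel-verified Lean document; each statement's English description precedes it below -/
import Mathlib

section
/- Let Φ : ℝⁿ⁻¹ × ℝ → Prop, let C ⊆ ℝⁿ⁻¹, and suppose C₁,…,C_m are subsets of C × ℝ whose union is C × ℝ, each Cᵢ projects onto all of C, and Φ is truth-invariant on each Cᵢ. Fix sample points sᵢ ∈ Cᵢ. Then for every s ∈ C, (∀ y ∈ ℝ, Φ(s, y)) holds if and only if Φ(sᵢ) holds for every i. -/
open Set

theorem forall_mem_iff_forall_sample {X ι : Type*} {Φ : X → Prop} {S : Set X}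
    {cells : ι → Set X} (hcover : S ⊆ ⋃ i, cells i) (hmeet : ∀ i, (cells i ∩ S).Nonempty)
    (hinv : ∀ i, ∀ p ∈ cells i, ∀ q ∈ cells i, Φ p ↔ Φ q)
    {sp : ι → X} (hsp : ∀ i, sp i ∈ cells i) :
    (∀ p ∈ S, Φ p) ↔ ∀ i, Φ (sp i) := by
  constructor
  · intro h i
    obtain ⟨p, hp, hpS⟩ := hmeet i
    exact (hinv i _ (hsp i) p hp).mpr (h p hpS)
  · intro h p hpS
    obtain ⟨i, hi⟩ := mem_iUnion.mp (hcover hpS)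
    exact (hinv i _ (hsp i) p hi).mp (h i)

theorem cad_forall_lift_general {n m : ℕ} (Φ : (Fin n → ℝ) × ℝ → Prop)
    (C : Set (Fin n → ℝ)) (cells : Fin m → Set ((Fin n → ℝ) × ℝ))
    (hcover : (⋃ i, cells i) = C ×ˢ (Set.univ : Set ℝ))
    (hproj : ∀ i, ∀ s ∈ C, ∃ y : ℝ, (s, y) ∈ cells i)
    (hinv : ∀ i, ∀ p ∈ cells i, ∀ q ∈ cells i, Φ p ↔ Φ q)
    (sp : Fin m → (Fin n → ℝ) × ℝ) (hsp : ∀ i, sp i ∈ cells i) :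
    ∀ s ∈ C, ((∀ y : ℝ, Φ (s, y)) ↔ ∀ i, Φ (sp i)) := by
  intro s hs
  have hfiber_cover : ({s} ×ˢ univ : Set ((Fin n → ℝ) × ℝ)) ⊆ ⋃ i, cells i := by
    rw [hcover]
    exact prod_mono (singleton_subset_iff.mpr hs) subset_rfl
  have hfiber_meet (i : Fin m) : (cells i ∩ {s} ×ˢ univ).Nonempty := by
    obtain ⟨y, hy⟩ := hproj i s hs
    exact ⟨(s, y), hy, rfl, trivial⟩
  rw [← forall_mem_iff_forall_sample hfiber_cover hfiber_meet hinv hsp]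
  simp only [mem_prod, mem_singleton_iff, mem_univ, and_true, Prod.forall,
    forall_comm (α := Fin n → ℝ), forall_eq]

/-- Universal lifting step of CAD: cells `C₁,…,C_m` covering the cylinder
`C × ℝ`, each projecting onto `C`, truth-invariant for `Φ`, with sample
points `s i ∈ C i`. -/
theorem cad_forall_lift {n m : ℕ} (Φ : (Fin n → ℝ) × ℝ → Prop)
    (C : Set (Fin n → ℝ)) (cells : Fin m → Set ((Fin n → ℝ) × ℝ))
    (hsub : ∀ i, cells i ⊆ C ×ˢ (Set.univ : Set ℝ))
    (hcover : (⋃ i, cells i) = C ×ˢ (Set.univ : Set ℝ))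
    (hproj : ∀ i, ∀ s ∈ C, ∃ y : ℝ, (s, y) ∈ cells i)
    (hinv : ∀ i, ∀ p ∈ cells i, ∀ q ∈ cells i, Φ p ↔ Φ q)
    (sp : Fin m → (Fin n → ℝ) × ℝ) (hsp : ∀ i, sp i ∈ cells i) :
    ∀ s ∈ C, ((∀ y : ℝ, Φ (s, y)) ↔ ∀ i, Φ (sp i)) :=
  cad_forall_lift_general Φ C cells hcover hproj hinv sp hsp
end

section
/- For truth-invariant decompositions, removing a subtree whose root has a determined truth value preserves correctness: if Φ is truth-invariant on a cell C and all cells in the cylinder above C, and the truth value of the quantified formula Q y Φ on C has been determined from finitely many sample points as in the CAD lifting lemma, then the truth of the full quantified formula on any cell of the base decomposition is unchanged by discarding (not evaluating) the cells above C. -/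
/-! A cell on which `Φ` is truth-invariant and which meets the fibre over `x` transfers the
truth value of its sample point to some point of that fibre. So one true sample already makes
`∃ y, Φ (x, y)` true and one false sample already makes `∀ y, Φ (x, y)` false; both sides of
each claimed equivalence are then true, respectively false, whichever other cells are kept. -/

def IsTruthInvariant {γ : Type*} (Φ : γ → Prop) (c : Set γ) : Prop :=
  ∀ p ∈ c, ∀ q ∈ c, Φ p ↔ Φ q

namespace IsTruthInvariant

variable {α β : Type*} {Φ : α × β → Prop} {c : Set (α × β)} {s : α × β} {x : α}

theorem exists_fiber (hc : IsTruthInvariant Φ c) (hs : s ∈ c) (hx : ∃ y, (x, y) ∈ c)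
    (hΦ : Φ s) : ∃ y, Φ (x, y) :=
  let ⟨y, hy⟩ := hx
  ⟨y, (hc _ hy _ hs).2 hΦ⟩

theorem not_forall_fiber (hc : IsTruthInvariant Φ c) (hs : s ∈ c) (hx : ∃ y, (x, y) ∈ c)
    (hΦ : ¬Φ s) : ¬∀ y, Φ (x, y) := fun h =>
  let ⟨y, hy⟩ := hx
  hΦ ((hc _ hy _ hs).1 (h y))

end IsTruthInvariant

theorem partial_cad_pruning_general {n m : ℕ} (Φ : (Fin n → ℝ) × ℝ → Prop)
    (C : Set (Fin n → ℝ)) (cells : Fin m → Set ((Fin n → ℝ) × ℝ))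
    (hproj : ∀ i, ∀ x ∈ C, ∃ y : ℝ, (x, y) ∈ cells i)
    (hinv : ∀ i, ∀ p ∈ cells i, ∀ q ∈ cells i, Φ p ↔ Φ q)
    (s : Fin m → (Fin n → ℝ) × ℝ) (hs : ∀ i, s i ∈ cells i) :
    (∀ T : Finset (Fin m), (∃ i ∈ T, Φ (s i)) →
        ∀ x ∈ C, ((∃ y : ℝ, Φ (x, y)) ↔ ∃ i ∈ T, Φ (s i))) ∧
      (∀ T : Finset (Fin m), (∃ i ∈ T, ¬ Φ (s i)) →
        ∀ x ∈ C, ((∀ y : ℝ, Φ (x, y)) ↔ ∀ i ∈ T, Φ (s i))) := by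
  have hcell (i : Fin m) : IsTruthInvariant Φ (cells i) := hinv i
  constructor
  · rintro T ⟨i, hiT, hΦ⟩ x hx
    exact iff_of_true ((hcell i).exists_fiber (hs i) (hproj i x hx) hΦ) ⟨i, hiT, hΦ⟩
  · rintro T ⟨i, hiT, hΦ⟩ x hx
    exact iff_of_false ((hcell i).not_forall_fiber (hs i) (hproj i x hx) hΦ)
      fun h => hΦ (h i hiT)

/-- Partial CAD pruning: in a truth-invariant cell decomposition of the
cylinder over a base cell `C`, once some subfamily of cells contains a
decisive sample point (a true one for `∃`, a false one for `∀`), the truth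
value of the quantified formula on `C` is already determined by that
subfamily; discarding (not evaluating) the remaining cells does not change
the result. -/
theorem partial_cad_pruning {n m : ℕ} (Φ : (Fin n → ℝ) × ℝ → Prop)
    (C : Set (Fin n → ℝ)) (cells : Fin m → Set ((Fin n → ℝ) × ℝ))
    (hsub : ∀ i, cells i ⊆ C ×ˢ (Set.univ : Set ℝ))
    (hcover : (⋃ i, cells i) = C ×ˢ (Set.univ : Set ℝ))
    (hproj : ∀ i, ∀ x ∈ C, ∃ y : ℝ, (x, y) ∈ cells i)
    (hinv : ∀ i, ∀ p ∈ cells i, ∀ q ∈ cells i, Φ p ↔ Φ q)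
    (s : Fin m → (Fin n → ℝ) × ℝ) (hs : ∀ i, s i ∈ cells i) :
    (∀ T : Finset (Fin m), (∃ i ∈ T, Φ (s i)) →
        ∀ x ∈ C, ((∃ y : ℝ, Φ (x, y)) ↔ ∃ i ∈ T, Φ (s i))) ∧
      (∀ T : Finset (Fin m), (∃ i ∈ T, ¬ Φ (s i)) →
        ∀ x ∈ C, ((∀ y : ℝ, Φ (x, y)) ↔ ∀ i ∈ T, Φ (s i))) :=
  partial_cad_pruning_general Φ C cells hproj hinv s hs
end
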